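/- arXiv:2502.00195 — 6 statements merged into one kernel-verified Lean document; each statement's English description precedes it below -/
import Mathlib

section
/- Theorem 1 (sufficiency). If state-dependent stochastic choice data P satisfies NIS for the utility function u, then P has a capacity-constrained learning representation; moreover, one can take the feasible set of information structures to be the set of revealed experiments 𝒬* = {Q_i^P : i ∈ D}, with each decision problem i represented by the revealed experiment Q_i^P together with the revealed action strategy q_i^P. -/
open Finset
open scoped Classical

noncomputable section

variable {Ω 𝒜 D X : Type*}

/-- `P` is state-dependent stochastic choice (SDSC) data for prior `μ` and action sets `A`
(extended by `0` outside `A i`). -/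
def IsSDSC [Fintype Ω] (μ : Ω → ℝ) (A : D → Finset 𝒜) (P : D → 𝒜 → Ω → ℝ) : Prop :=
  (∀ i a ω, 0 ≤ P i a ω) ∧ (∀ i a ω, P i a ω ≤ 1) ∧
    (∀ i a ω, a ∉ A i → P i a ω = 0) ∧ ∀ i ω, ∑ a ∈ A i, P i a ω = μ ω

/-- `μ` is a full-support prior probability on `Ω`. -/
def IsPrior [Fintype Ω] (μ : Ω → ℝ) : Prop := (∀ ω, 0 < μ ω) ∧ ∑ ω, μ ω = 1

/-- No Improving (Action or Attention) Switches. -/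
def NIS [Fintype Ω] (u : X → ℝ) (A : D → Finset 𝒜) (hA : ∀ i, (A i).Nonempty)
    (x : D → 𝒜 → Ω → X) (P : D → 𝒜 → Ω → ℝ) : Prop :=
  ∀ i j : D, ∑ a ∈ A i, ∑ ω, P i a ω * u (x i a ω) ≥
    ∑ a ∈ A j, (A i).sup' (hA i) fun a' => ∑ ω, P j a ω * u (x i a' ω)

/-- An information structure: a finitely supported probability distribution over posteriors
on `Ω` that is Bayes-consistent with the prior `μ`. -/
structure InfoStruct (Ω : Type*) [Fintype Ω] (μ : Ω → ℝ) where
  Q : (Ω → ℝ) → ℝ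
  finite_support : (Function.support Q).Finite
  nonneg : ∀ γ, 0 ≤ Q γ
  posterior_nonneg : ∀ γ ∈ Function.support Q, ∀ ω, 0 ≤ γ ω
  posterior_sum_one : ∀ γ ∈ Function.support Q, ∑ ω, γ ω = 1
  mass_one : ∑ γ ∈ finite_support.toFinset, Q γ = 1
  bayes : ∀ ω, ∑ γ ∈ finite_support.toFinset, Q γ * γ ω = μ ω

/-- An action strategy for `Qs` on action set `A`. -/
def IsStrategy [Fintype Ω] {μ : Ω → ℝ} (Qs : InfoStruct Ω μ) (A : Finset 𝒜)
    (q : (Ω → ℝ) → 𝒜 → ℝ) : Prop :=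
  ∀ γ ∈ Function.support Qs.Q,
    (∀ a, 0 ≤ q γ a) ∧ (∀ a ∉ A, q γ a = 0) ∧ ∑ a ∈ A, q γ a = 1

/-- The SDSC generated by the strategy `(Qs, q)`. -/
def genSDSC [Fintype Ω] {μ : Ω → ℝ} (Qs : InfoStruct Ω μ) (q : (Ω → ℝ) → 𝒜 → ℝ)
    (a : 𝒜) (ω : Ω) : ℝ :=
  ∑ γ ∈ Qs.finite_support.toFinset, q γ a * Qs.Q γ * γ ω

/-- Posterior expected utility `U(a | γ, x)`. -/
def postEU [Fintype Ω] (u : X → ℝ) (x : 𝒜 → Ω → X) (a : 𝒜) (γ : Ω → ℝ) : ℝ :=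
  ∑ ω, γ ω * u (x a ω)

/-- Gross expected utility `g(Q, q | x)`. -/
def gross [Fintype Ω] {μ : Ω → ℝ} (u : X → ℝ) (Qs : InfoStruct Ω μ) (A : Finset 𝒜)
    (q : (Ω → ℝ) → 𝒜 → ℝ) (x : 𝒜 → Ω → X) : ℝ :=
  ∑ γ ∈ Qs.finite_support.toFinset, ∑ a ∈ A, Qs.Q γ * q γ a * postEU u x a γ

/-- Indirect expected utility `G(Q | A, x)`: the maximal gross expected utility over
action strategies for `Qs` on `A`. -/
def indirect [Fintype Ω] {μ : Ω → ℝ} (u : X → ℝ) (Qs : InfoStruct Ω μ)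
    (A : Finset 𝒜) (x : 𝒜 → Ω → X) : ℝ :=
  sSup {r | ∃ q, IsStrategy Qs A q ∧ gross u Qs A q x = r}

/-- Marginal choice probability `P_i(a)`. -/
def margP [Fintype Ω] (P : D → 𝒜 → Ω → ℝ) (i : D) (a : 𝒜) : ℝ := ∑ ω, P i a ω

/-- Revealed posterior `γ_i^a`. -/
def revPost [Fintype Ω] (P : D → 𝒜 → Ω → ℝ) (i : D) (a : 𝒜) : Ω → ℝ :=
  fun ω => P i a ω / margP P i a

/-- The revealed experiment `Q_i^P`, as a mass function on posteriors. -/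
def revExpFun [Fintype Ω] (P : D → 𝒜 → Ω → ℝ) (A : D → Finset 𝒜) (i : D)
    (γ : Ω → ℝ) : ℝ :=
  ∑ a ∈ (A i).filter (fun a => 0 < margP P i a ∧ revPost P i a = γ), margP P i a

/-- The revealed action strategy `q_i^P`. -/
def revStrat [Fintype Ω] (P : D → 𝒜 → Ω → ℝ) (A : D → Finset 𝒜) (i : D)
    (γ : Ω → ℝ) (a : 𝒜) : ℝ :=
  if 0 < margP P i a ∧ revPost P i a = γ then margP P i a / revExpFun P A i γ else 0

/-- `P` has a capacity-constrained learning representation. -/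
def CCR [Fintype Ω] (u : X → ℝ) (μ : Ω → ℝ) (A : D → Finset 𝒜)
    (x : D → 𝒜 → Ω → X) (P : D → 𝒜 → Ω → ℝ) : Prop :=
  ∃ (𝒬 : Set (InfoStruct Ω μ)) (Qi : D → InfoStruct Ω μ) (qi : D → (Ω → ℝ) → 𝒜 → ℝ),
    ∀ i : D, Qi i ∈ 𝒬 ∧ IsStrategy (Qi i) (A i) (qi i) ∧
      (∀ a ∈ A i, ∀ ω, genSDSC (Qi i) (qi i) a ω = P i a ω) ∧
      gross u (Qi i) (A i) (qi i) (x i) = indirect u (Qi i) (A i) (x i) ∧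
      ∀ Q ∈ 𝒬, indirect u (Qi i) (A i) (x i) ≥ indirect u Q (A i) (x i)

/-! Under the revealed experiment `Q_j^P` the posterior after choosing `a` in problem `j` is
`γ_j^a`, reached with probability `P_j(a)`. So in problem `i` a decision maker equipped with
`Q_j^P` can earn at most `Σ_a max_{â ∈ A_i} Σ_ω P_j(a, ω) u(x_i(â, ω))`, the right-hand side of
NIS for `(i, j)`, while the revealed strategy with `Q_i^P` earns exactly its left-hand side.
NIS therefore says that `(Q_i^P, q_i^P)` is optimal among all strategies based on any `Q_j^P`,
which gives both the optimality of `q_i^P` and that of the choice of `Q_i^P`. -/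

section Strategies

variable [Fintype Ω] {μ : Ω → ℝ} {Qs : InfoStruct Ω μ} {B : Finset 𝒜}

lemma exists_isStrategy (Qs : InfoStruct Ω μ) (hB : B.Nonempty) : ∃ q, IsStrategy Qs B q := by
  obtain ⟨b, hb⟩ := hB
  refine ⟨fun _ a => if a = b then 1 else 0, fun _ _ => ⟨fun a => ?_, fun a ha => ?_, ?_⟩⟩
  · dsimp only
    split_ifs <;> norm_num
  · exact if_neg fun h : a = b => ha (h ▸ hb)
  · rw [Finset.sum_ite_eq' B b, if_pos hb]

lemma gross_le_sum_mul_sup' (hB : B.Nonempty) {q : (Ω → ℝ) → 𝒜 → ℝ} (hq : IsStrategy Qs B q)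
    (u : X → ℝ) (y : 𝒜 → Ω → X) :
    gross u Qs B q y ≤
      ∑ γ ∈ Qs.finite_support.toFinset, Qs.Q γ * B.sup' hB fun b => postEU u y b γ := by
  refine Finset.sum_le_sum fun γ hγ => ?_
  obtain ⟨hq_nonneg, -, hq_sum⟩ := hq γ (Qs.finite_support.mem_toFinset.mp hγ)
  calc ∑ a ∈ B, Qs.Q γ * q γ a * postEU u y a γ
      ≤ ∑ a ∈ B, Qs.Q γ * q γ a * B.sup' hB fun b => postEU u y b γ :=
        Finset.sum_le_sum fun a ha => mul_le_mul_of_nonneg_left (Finset.le_sup' (fun b => postEU u y b γ) ha)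
          (mul_nonneg (Qs.nonneg γ) (hq_nonneg a))
    _ = Qs.Q γ * B.sup' hB fun b => postEU u y b γ := by
        rw [← Finset.sum_mul, ← Finset.mul_sum, hq_sum, mul_one]

lemma indirect_eq_gross {u : X → ℝ} {y : 𝒜 → Ω → X} {q : (Ω → ℝ) → 𝒜 → ℝ}
    (hq : IsStrategy Qs B q)
    (hmax : ∀ q', IsStrategy Qs B q' → gross u Qs B q' y ≤ gross u Qs B q y) :
    indirect u Qs B y = gross u Qs B q y :=
  IsGreatest.csSup_eq ⟨⟨q, hq, rfl⟩, by rintro _ ⟨q', hq', rfl⟩; exact hmax q' hq'⟩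

lemma indirect_le_of_forall_gross_le {u : X → ℝ} {y : 𝒜 → Ω → X} {c : ℝ} (hB : B.Nonempty)
    (h : ∀ q, IsStrategy Qs B q → gross u Qs B q y ≤ c) : indirect u Qs B y ≤ c := by
  obtain ⟨q, hq⟩ := exists_isStrategy Qs hB
  exact csSup_le ⟨_, q, hq, rfl⟩ fun _ ⟨q', hq', hr⟩ => hr ▸ h q' hq'

end Strategies

section Revealed

variable [Fintype Ω] {μ : Ω → ℝ} {A : D → Finset 𝒜} {P : D → 𝒜 → Ω → ℝ} {i : D} {a : 𝒜}

lemma IsSDSC.margP_nonneg (hP : IsSDSC μ A P) (i : D) (a : 𝒜) : 0 ≤ margP P i a :=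
  Finset.sum_nonneg fun ω _ => hP.1 i a ω

lemma IsSDSC.eq_zero_of_margP_eq_zero (hP : IsSDSC μ A P) (h : margP P i a = 0) (ω : Ω) :
    P i a ω = 0 :=
  (Finset.sum_eq_zero_iff_of_nonneg fun ω _ => hP.1 i a ω).mp h ω (Finset.mem_univ ω)

lemma IsSDSC.sum_margP (hP : IsSDSC μ A P) (i : D) :
    ∑ a ∈ A i, margP P i a = ∑ ω, μ ω := by
  simp only [margP]
  rw [Finset.sum_comm]
  exact Finset.sum_congr rfl fun ω _ => hP.2.2.2 i ω

lemma margP_mul_revPost (hP : IsSDSC μ A P) (ω : Ω) :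
    margP P i a * revPost P i a ω = P i a ω :=
  mul_div_cancel_of_imp' fun h => hP.eq_zero_of_margP_eq_zero h ω

lemma margP_mul_postEU_revPost (hP : IsSDSC μ A P) (u : X → ℝ) (y : 𝒜 → Ω → X) (b : 𝒜) :
    margP P i a * postEU u y b (revPost P i a) = ∑ ω, P i a ω * u (y b ω) := by
  simp only [postEU, Finset.mul_sum, ← mul_assoc, margP_mul_revPost hP]

lemma revExpFun_nonneg (hP : IsSDSC μ A P) (i : D) (γ : Ω → ℝ) : 0 ≤ revExpFun P A i γ :=
  Finset.sum_nonneg fun a _ => hP.margP_nonneg i a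

lemma revExpFun_revPost_pos (ha : a ∈ A i) (hm : 0 < margP P i a) :
    0 < revExpFun P A i (revPost P i a) :=
  Finset.sum_pos (fun _ hb => (Finset.mem_filter.mp hb).2.1)
    ⟨a, Finset.mem_filter.mpr ⟨ha, hm, rfl⟩⟩

lemma exists_revPost_eq_of_revExpFun_ne_zero {γ : Ω → ℝ} (h : revExpFun P A i γ ≠ 0) :
    ∃ a ∈ A i, 0 < margP P i a ∧ revPost P i a = γ := by
  obtain ⟨a, ha, -⟩ := Finset.exists_ne_zero_of_sum_ne_zero h
  obtain ⟨ha, hcond⟩ := Finset.mem_filter.mp ha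
  exact ⟨a, ha, hcond⟩

lemma finite_support_revExpFun (i : D) : (Function.support (revExpFun P A i)).Finite :=
  ((A i).image (revPost P i)).finite_toSet.subset fun _ hγ => by
    obtain ⟨a, ha, -, rfl⟩ := exists_revPost_eq_of_revExpFun_ne_zero hγ
    exact Finset.mem_coe.mpr (Finset.mem_image_of_mem _ ha)

lemma support_revExpFun_subset {Qs : InfoStruct Ω μ} (hQ : Qs.Q = revExpFun P A i) :
    Function.support (revExpFun P A i) ⊆ Qs.finite_support.toFinset := by
  simp [hQ]

lemma sum_revExpFun_mul (hP : IsSDSC μ A P) {T : Finset (Ω → ℝ)}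
    (hT : Function.support (revExpFun P A i) ⊆ T) (F : (Ω → ℝ) → ℝ) :
    ∑ γ ∈ T, revExpFun P A i γ * F γ = ∑ a ∈ A i, margP P i a * F (revPost P i a) := by
  rw [← Finset.sum_filter_of_ne fun a _ h =>
    (hP.margP_nonneg i a).lt_of_ne' (left_ne_zero_of_mul h)]
  rw [← Finset.sum_fiberwise_of_maps_to (t := T) (g := revPost P i) fun a ha =>
    hT (revExpFun_revPost_pos (Finset.mem_filter.mp ha).1 (Finset.mem_filter.mp ha).2).ne']
  refine Finset.sum_congr rfl fun γ _ => ?_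
  rw [revExpFun, Finset.sum_mul, Finset.filter_filter]
  exact Finset.sum_congr rfl fun a ha => by rw [(Finset.mem_filter.mp ha).2.2]

lemma revStrat_eq_zero_of_revPost_ne {γ : Ω → ℝ} (h : revPost P i a ≠ γ) :
    revStrat P A i γ a = 0 :=
  if_neg fun h' => h h'.2

lemma revStrat_eq_zero_of_not_pos {γ : Ω → ℝ} (h : ¬ 0 < margP P i a) :
    revStrat P A i γ a = 0 :=
  if_neg fun h' => h h'.1

lemma sum_revExpFun_mul_revStrat (hP : IsSDSC μ A P) {T : Finset (Ω → ℝ)}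
    (hT : Function.support (revExpFun P A i) ⊆ T) (ha : a ∈ A i) (F : (Ω → ℝ) → ℝ) :
    ∑ γ ∈ T, revExpFun P A i γ * revStrat P A i γ a * F γ = margP P i a * F (revPost P i a) := by
  by_cases hm : 0 < margP P i a
  · have hpos := revExpFun_revPost_pos ha hm
    rw [Finset.sum_eq_single_of_mem _ (hT hpos.ne') fun γ _ hγ => by
      rw [revStrat_eq_zero_of_revPost_ne (Ne.symm hγ), mul_zero, zero_mul]]
    rw [revStrat, if_pos ⟨hm, rfl⟩, mul_div_cancel₀ _ hpos.ne']
  · simp only [revStrat_eq_zero_of_not_pos hm, mul_zero, zero_mul, Finset.sum_const_zero,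
      ← (hP.margP_nonneg i a).eq_of_not_lt hm]

lemma isStrategy_revStrat (hP : IsSDSC μ A P) {Qs : InfoStruct Ω μ}
    (hQ : Qs.Q = revExpFun P A i) : IsStrategy Qs (A i) (revStrat P A i) := by
  intro γ hγ
  rw [Function.mem_support, hQ] at hγ
  refine ⟨fun a => ?_, fun a ha => revStrat_eq_zero_of_not_pos fun hm => ?_, ?_⟩
  · unfold revStrat
    split
    · exact div_nonneg (hP.margP_nonneg i a) (revExpFun_nonneg hP i γ)
    · exact le_rfl
  · exact hm.ne' (Finset.sum_eq_zero fun ω _ => hP.2.2.1 i a ω ha)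
  · unfold revStrat
    rw [← Finset.sum_filter, ← Finset.sum_div]
    exact div_self hγ

lemma genSDSC_revStrat (hP : IsSDSC μ A P) {Qs : InfoStruct Ω μ}
    (hQ : Qs.Q = revExpFun P A i) (ha : a ∈ A i) (ω : Ω) :
    genSDSC Qs (revStrat P A i) a ω = P i a ω := by
  rw [genSDSC, ← margP_mul_revPost hP,
    ← sum_revExpFun_mul_revStrat hP (support_revExpFun_subset hQ) ha (· ω)]
  exact Finset.sum_congr rfl fun γ _ => by rw [hQ]; ring

lemma gross_revStrat (hP : IsSDSC μ A P) {Qs : InfoStruct Ω μ}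
    (hQ : Qs.Q = revExpFun P A i) (u : X → ℝ) (y : 𝒜 → Ω → X) :
    gross u Qs (A i) (revStrat P A i) y = ∑ a ∈ A i, ∑ ω, P i a ω * u (y a ω) := by
  rw [gross, Finset.sum_comm]
  refine Finset.sum_congr rfl fun a ha => ?_
  rw [← margP_mul_postEU_revPost hP,
    ← sum_revExpFun_mul_revStrat hP (support_revExpFun_subset hQ) ha]
  exact Finset.sum_congr rfl fun γ _ => by rw [hQ]

lemma gross_le_of_revealed (hP : IsSDSC μ A P) {B : Finset 𝒜} (hB : B.Nonempty)
    {Qs : InfoStruct Ω μ} {j : D} (hQ : Qs.Q = revExpFun P A j)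
    {q : (Ω → ℝ) → 𝒜 → ℝ} (hq : IsStrategy Qs B q) (u : X → ℝ) (y : 𝒜 → Ω → X) :
    gross u Qs B q y ≤ ∑ a ∈ A j, B.sup' hB fun b => ∑ ω, P j a ω * u (y b ω) :=
  calc gross u Qs B q y
      ≤ ∑ γ ∈ Qs.finite_support.toFinset, Qs.Q γ * B.sup' hB fun b => postEU u y b γ :=
        gross_le_sum_mul_sup' hB hq u y
    _ = ∑ a ∈ A j, margP P j a * B.sup' hB fun b => postEU u y b (revPost P j a) := by
        rw [← sum_revExpFun_mul hP (support_revExpFun_subset hQ) fun γ => B.sup' hB fun b => postEU u y b γ]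
        exact Finset.sum_congr rfl fun γ _ => by rw [hQ]
    _ = ∑ a ∈ A j, B.sup' hB fun b => ∑ ω, P j a ω * u (y b ω) :=
        Finset.sum_congr rfl fun a _ => by
          simp only [Finset.mul₀_sup' (hP.margP_nonneg j a), margP_mul_postEU_revPost hP]

def revealedExperiment (hμ : ∑ ω, μ ω = 1) (hP : IsSDSC μ A P) (i : D) : InfoStruct Ω μ where
  Q := revExpFun P A i
  finite_support := finite_support_revExpFun i
  nonneg := revExpFun_nonneg hP i
  posterior_nonneg γ hγ ω := by
    obtain ⟨a, -, -, rfl⟩ := exists_revPost_eq_of_revExpFun_ne_zero hγ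
    exact div_nonneg (hP.1 i a ω) (hP.margP_nonneg i a)
  posterior_sum_one γ hγ := by
    obtain ⟨a, -, hm, rfl⟩ := exists_revPost_eq_of_revExpFun_ne_zero hγ
    simp only [revPost]
    rw [← Finset.sum_div]
    exact div_self hm.ne'
  mass_one := by
    have h := sum_revExpFun_mul hP (finite_support_revExpFun i).coe_toFinset.symm.subset (fun _ => 1)
    simp only [mul_one] at h
    rw [h, hP.sum_margP, hμ]
  bayes ω := by
    rw [sum_revExpFun_mul hP (finite_support_revExpFun i).coe_toFinset.symm.subset (· ω)]
    simp only [margP_mul_revPost hP]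
    exact hP.2.2.2 i ω

theorem revealed_represents (hA : ∀ i, (A i).Nonempty) (hP : IsSDSC μ A P) {u : X → ℝ}
    {x : D → 𝒜 → Ω → X} (hNIS : NIS u A hA x P) {Qr : D → InfoStruct Ω μ}
    (hQr : ∀ i, (Qr i).Q = revExpFun P A i) (i : D) :
    IsStrategy (Qr i) (A i) (revStrat P A i) ∧
      (∀ a ∈ A i, ∀ ω, genSDSC (Qr i) (revStrat P A i) a ω = P i a ω) ∧
      gross u (Qr i) (A i) (revStrat P A i) (x i) = indirect u (Qr i) (A i) (x i) ∧
      ∀ j : D, indirect u (Qr i) (A i) (x i) ≥ indirect u (Qr j) (A i) (x i) := by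
  have hbound : ∀ j q, IsStrategy (Qr j) (A i) q →
      gross u (Qr j) (A i) q (x i) ≤ gross u (Qr i) (A i) (revStrat P A i) (x i) :=
    fun j _ hq => gross_revStrat hP (hQr i) u (x i) ▸
      (gross_le_of_revealed hP (hA i) (hQr j) hq u (x i)).trans (hNIS i j)
  have hvalue := indirect_eq_gross (isStrategy_revStrat hP (hQr i)) (hbound i)
  exact ⟨isStrategy_revStrat hP (hQr i), fun a ha ω => genSDSC_revStrat hP (hQr i) ha ω,
    hvalue.symm, fun j => hvalue ▸ indirect_le_of_forall_gross_le (hA i) (hbound j)⟩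

end Revealed

theorem nis_sufficiency_general [Fintype Ω]
    (μ : Ω → ℝ) (u : X → ℝ) (A : D → Finset 𝒜) (hA : ∀ i, (A i).Nonempty)
    (x : D → 𝒜 → Ω → X) (P : D → 𝒜 → Ω → ℝ)
    (hμ : IsPrior μ) (hP : IsSDSC μ A P)
    (hNIS : NIS u A hA x P) :
    CCR u μ A x P ∧
      ∀ Qr : D → InfoStruct Ω μ, (∀ i, (Qr i).Q = revExpFun P A i) →
        ∀ i : D, IsStrategy (Qr i) (A i) (revStrat P A i) ∧
          (∀ a ∈ A i, ∀ ω, genSDSC (Qr i) (revStrat P A i) a ω = P i a ω) ∧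
          gross u (Qr i) (A i) (revStrat P A i) (x i) = indirect u (Qr i) (A i) (x i) ∧
          ∀ j : D, indirect u (Qr i) (A i) (x i) ≥ indirect u (Qr j) (A i) (x i) := by
  refine ⟨?_, fun Qr hQr => revealed_represents hA hP hNIS hQr⟩
  let Qr := revealedExperiment hμ.2 hP
  refine ⟨Set.range Qr, Qr, revStrat P A, fun i => ?_⟩
  obtain ⟨hq, hgen, hopt, hbest⟩ := revealed_represents hA hP hNIS (Qr := Qr) (fun _ => rfl) i
  exact ⟨Set.mem_range_self i, hq, hgen, hopt, Set.forall_mem_range.mpr hbest⟩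

/-- Theorem 1 (sufficiency): if SDSC data `P` satisfies NIS for `u`, then `P` has a
capacity-constrained learning representation; moreover, one can take the feasible set
to be the revealed experiments `{Q_i^P : i ∈ D}`, with each decision problem `i`
represented by the revealed experiment `Q_i^P` and the revealed action strategy `q_i^P`. -/
theorem nis_sufficiency [Fintype Ω] [Fintype 𝒜] [Fintype D]
    (μ : Ω → ℝ) (u : X → ℝ) (A : D → Finset 𝒜) (hA : ∀ i, (A i).Nonempty)
    (x : D → 𝒜 → Ω → X) (P : D → 𝒜 → Ω → ℝ)
    (hμ : IsPrior μ) (hP : IsSDSC μ A P)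
    (hNIS : NIS u A hA x P) :
    CCR u μ A x P ∧
      ∀ Qr : D → InfoStruct Ω μ, (∀ i, (Qr i).Q = revExpFun P A i) →
        ∀ i : D, IsStrategy (Qr i) (A i) (revStrat P A i) ∧
          (∀ a ∈ A i, ∀ ω, genSDSC (Qr i) (revStrat P A i) a ω = P i a ω) ∧
          gross u (Qr i) (A i) (revStrat P A i) (x i) = indirect u (Qr i) (A i) (x i) ∧
          ∀ j : D, indirect u (Qr i) (A i) (x i) ≥ indirect u (Qr j) (A i) (x i) :=
  nis_sufficiency_general μ u A hA x P hμ hP hNIS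
end
end

section
/- Theorem 1 (necessity). If state-dependent stochastic choice data P has a capacity-constrained learning representation with respect to the utility function u, then P satisfies NIS for u. -/
open Finset
open scoped Classical

noncomputable section

variable {Ω 𝒜 D X : Type*}

/- The left side of NIS for `(i, j)` is the value `G(Q_i | A_i, x_i)` attained by the
representing strategy. On the right side, replacing each action `a ∈ A_j` by a best reply
`b a ∈ A_i` turns the representing strategy for `j` into a strategy on `A_i` for the information
structure `Q_j`, whose gross utility is exactly the right side. It is at most `G(Q_j | A_i, x_i)`,
which is at most `G(Q_i | A_i, x_i)` because `Q_i` is optimal in `𝒬*` for problem `i`. -/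

def switchStrategy (A' : Finset 𝒜) (b : 𝒜 → 𝒜) (q : (Ω → ℝ) → 𝒜 → ℝ) :
    (Ω → ℝ) → 𝒜 → ℝ :=
  fun γ c => ∑ a ∈ A' with b a = c, q γ a

section Utility

variable [Fintype Ω] {μ : Ω → ℝ} (u : X → ℝ) (Qs : InfoStruct Ω μ)

lemma postEU_le {x : 𝒜 → Ω → X} {a : 𝒜} {γ : Ω → ℝ} {M : ℝ} (hγ₀ : ∀ ω, 0 ≤ γ ω)
    (hγ₁ : ∑ ω, γ ω = 1) (hM : ∀ ω, u (x a ω) ≤ M) : postEU u x a γ ≤ M :=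
  calc postEU u x a γ ≤ ∑ ω, γ ω * M :=
        sum_le_sum fun ω _ => mul_le_mul_of_nonneg_left (hM ω) (hγ₀ ω)
    _ = M := by rw [← sum_mul, hγ₁, one_mul]

lemma gross_le {A : Finset 𝒜} {q : (Ω → ℝ) → 𝒜 → ℝ} {x : 𝒜 → Ω → X} {M : ℝ}
    (hq : IsStrategy Qs A q) (hM : ∀ a ∈ A, ∀ ω, u (x a ω) ≤ M) : gross u Qs A q x ≤ M :=
  calc gross u Qs A q x
      ≤ ∑ γ ∈ Qs.finite_support.toFinset, ∑ a ∈ A, Qs.Q γ * q γ a * M := by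
        refine sum_le_sum fun γ hγ => sum_le_sum fun a ha => ?_
        rw [Set.Finite.mem_toFinset] at hγ
        exact mul_le_mul_of_nonneg_left
          (postEU_le u (Qs.posterior_nonneg γ hγ) (Qs.posterior_sum_one γ hγ) (hM a ha))
          (mul_nonneg (Qs.nonneg γ) ((hq γ hγ).1 a))
    _ = ∑ γ ∈ Qs.finite_support.toFinset, Qs.Q γ * M := by
        refine sum_congr rfl fun γ hγ => ?_
        rw [Set.Finite.mem_toFinset] at hγ
        rw [← sum_mul, ← mul_sum, (hq γ hγ).2.2, mul_one]
    _ = M := by rw [← sum_mul, Qs.mass_one, one_mul]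

lemma bddAbove_gross (A : Finset 𝒜) (x : 𝒜 → Ω → X) :
    BddAbove {r | ∃ q, IsStrategy Qs A q ∧ gross u Qs A q x = r} := by
  refine ⟨∑ a ∈ A, ∑ ω, |u (x a ω)|, ?_⟩
  rintro r ⟨q, hq, rfl⟩
  refine gross_le u Qs hq fun a ha ω => (le_abs_self _).trans ?_
  calc |u (x a ω)| ≤ ∑ ω, |u (x a ω)| :=
        single_le_sum (f := fun ω => |u (x a ω)|) (fun _ _ => abs_nonneg _) (mem_univ ω)
    _ ≤ ∑ a ∈ A, ∑ ω, |u (x a ω)| :=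
        single_le_sum (f := fun a => ∑ ω, |u (x a ω)|)
          (fun _ _ => sum_nonneg fun _ _ => abs_nonneg _) ha

lemma gross_le_indirect {A : Finset 𝒜} {q : (Ω → ℝ) → 𝒜 → ℝ} (x : 𝒜 → Ω → X)
    (hq : IsStrategy Qs A q) : gross u Qs A q x ≤ indirect u Qs A x :=
  le_csSup (bddAbove_gross u Qs A x) ⟨q, hq, rfl⟩

lemma gross_eq_sum_genSDSC (A : Finset 𝒜) (q : (Ω → ℝ) → 𝒜 → ℝ) (x : 𝒜 → Ω → X) :
    gross u Qs A q x = ∑ a ∈ A, ∑ ω, genSDSC Qs q a ω * u (x a ω) := by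
  simp only [gross, genSDSC, postEU, sum_mul, mul_sum]
  rw [sum_comm]
  refine sum_congr rfl fun a _ => ?_
  rw [sum_comm]
  exact sum_congr rfl fun γ _ => sum_congr rfl fun ω _ => by ring

lemma genSDSC_switchStrategy (A' : Finset 𝒜) (b : 𝒜 → 𝒜) (q : (Ω → ℝ) → 𝒜 → ℝ) (c : 𝒜)
    (ω : Ω) :
    genSDSC Qs (switchStrategy A' b q) c ω = ∑ a ∈ A' with b a = c, genSDSC Qs q a ω := by
  simp only [genSDSC, switchStrategy, sum_mul]
  exact sum_comm

lemma gross_switchStrategy {A A' : Finset 𝒜} {b : 𝒜 → 𝒜} (hb : ∀ a ∈ A', b a ∈ A)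
    (q : (Ω → ℝ) → 𝒜 → ℝ) (x : 𝒜 → Ω → X) :
    gross u Qs A (switchStrategy A' b q) x =
      ∑ a ∈ A', ∑ ω, genSDSC Qs q a ω * u (x (b a) ω) := by
  rw [gross_eq_sum_genSDSC, ← sum_fiberwise_of_maps_to hb]
  refine sum_congr rfl fun c _ => ?_
  simp only [genSDSC_switchStrategy, sum_mul]
  rw [sum_comm]
  refine sum_congr rfl fun a ha => ?_
  rw [(mem_filter.1 ha).2]

lemma isStrategy_switchStrategy {A A' : Finset 𝒜} {b : 𝒜 → 𝒜} {q : (Ω → ℝ) → 𝒜 → ℝ}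
    (hq : IsStrategy Qs A' q) (hb : ∀ a ∈ A', b a ∈ A) :
    IsStrategy Qs A (switchStrategy A' b q) := by
  intro γ hγ
  obtain ⟨hq₀, -, hq₁⟩ := hq γ hγ
  refine ⟨fun c => sum_nonneg fun a _ => hq₀ a, fun c hc => sum_eq_zero fun a ha => ?_, ?_⟩
  · exact absurd ((mem_filter.1 ha).2 ▸ hb a (mem_filter.1 ha).1) hc
  · rw [← hq₁]
    exact sum_fiberwise_of_maps_to hb _

end Utility

theorem nis_necessity_general [Fintype Ω]
    (μ : Ω → ℝ) (u : X → ℝ) (A : D → Finset 𝒜) (hA : ∀ i, (A i).Nonempty)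
    (x : D → 𝒜 → Ω → X) (P : D → 𝒜 → Ω → ℝ)
    (hCCR : CCR u μ A x P) :
    NIS u A hA x P := by
  intro i j
  obtain ⟨𝒬, Q, q, hrep⟩ := hCCR
  obtain ⟨-, -, hPi, hopt, hmax⟩ := hrep i
  obtain ⟨hQj, hqj, hPj, -, -⟩ := hrep j
  choose b hb hbest using fun a =>
    exists_mem_eq_sup' (hA i) fun a' => ∑ ω, P j a ω * u (x i a' ω)
  calc ∑ a ∈ A i, ∑ ω, P i a ω * u (x i a ω)
      = gross u (Q i) (A i) (q i) (x i) := by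
        rw [gross_eq_sum_genSDSC]
        exact sum_congr rfl fun a ha => sum_congr rfl fun ω _ => by rw [hPi a ha]
    _ = indirect u (Q i) (A i) (x i) := hopt
    _ ≥ indirect u (Q j) (A i) (x i) := hmax (Q j) hQj
    _ ≥ gross u (Q j) (A i) (switchStrategy (A j) b (q j)) (x i) :=
        gross_le_indirect u (Q j) (x i) (isStrategy_switchStrategy (Q j) hqj fun a _ => hb a)
    _ = ∑ a ∈ A j, (A i).sup' (hA i) fun a' => ∑ ω, P j a ω * u (x i a' ω) := by
        rw [gross_switchStrategy u (Q j) fun a _ => hb a]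
        exact sum_congr rfl fun a ha => by
          rw [hbest a]
          exact sum_congr rfl fun ω _ => by rw [hPj a ha]

/-- Theorem 1 (necessity): if SDSC data `P` has a capacity-constrained learning
representation with respect to `u`, then `P` satisfies NIS for `u`. -/
theorem nis_necessity [Fintype Ω] [Fintype 𝒜] [Fintype D]
    (μ : Ω → ℝ) (u : X → ℝ) (A : D → Finset 𝒜) (hA : ∀ i, (A i).Nonempty)
    (x : D → 𝒜 → Ω → X) (P : D → 𝒜 → Ω → ℝ)
    (hμ : IsPrior μ) (hP : IsSDSC μ A P)
    (hCCR : CCR u μ A x P) :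
    NIS u A hA x P :=
  nis_necessity_general μ u A hA x P hCCR
end
end

section
/- If state-dependent stochastic choice data P satisfies NIS for the utility function u, then P satisfies NIAS for u. -/
open Finset
open scoped Classical

noncomputable section

variable {Ω 𝒜 D X : Type*}

/-- No Improving Action Switches. -/
def NIAS [Fintype Ω] (u : X → ℝ) (A : D → Finset 𝒜) (x : D → 𝒜 → Ω → X)
    (P : D → 𝒜 → Ω → ℝ) : Prop :=
  ∀ i : D, ∀ a ∈ A i, ∀ a' ∈ A i,
    ∑ ω, P i a ω * u (x i a ω) ≥ ∑ ω, P i a ω * u (x i a' ω)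

/- Taking `j = i` in NIS, each action's payoff is bounded by its best-switch payoff, and NIS says
the sums over `A i` compare the other way; so the two agree action by action, which is NIAS. -/
theorem NIS.sup'_switch_eq [Fintype Ω] {u : X → ℝ} {A : D → Finset 𝒜}
    {hA : ∀ i, (A i).Nonempty} {x : D → 𝒜 → Ω → X} {P : D → 𝒜 → Ω → ℝ}
    (hNIS : NIS u A hA x P) (i : D) {a : 𝒜} (ha : a ∈ A i) :
    (A i).sup' (hA i) (fun a' => ∑ ω, P i a ω * u (x i a' ω)) = ∑ ω, P i a ω * u (x i a ω) := by
  have hle : ∀ b ∈ A i, ∑ ω, P i b ω * u (x i b ω) ≤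
      (A i).sup' (hA i) fun a' => ∑ ω, P i b ω * u (x i a' ω) :=
    fun b hb => le_sup' (fun a' => ∑ ω, P i b ω * u (x i a' ω)) hb
  exact ((sum_eq_sum_iff_of_le hle).1 (le_antisymm (sum_le_sum hle) (hNIS i i)) a ha).symm

theorem nis_implies_nias_general [Fintype Ω]
    (u : X → ℝ) (A : D → Finset 𝒜) (hA : ∀ i, (A i).Nonempty)
    (x : D → 𝒜 → Ω → X) (P : D → 𝒜 → Ω → ℝ)
    (hNIS : NIS u A hA x P) :
    NIAS u A x P := by
  intro i a ha a' ha'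
  rw [← hNIS.sup'_switch_eq i ha]
  exact le_sup' (fun c => ∑ ω, P i a ω * u (x i c ω)) ha'

/-- If SDSC data `P` satisfies NIS for `u`, then `P` satisfies NIAS for `u`. -/
theorem nis_implies_nias [Fintype Ω] [Fintype 𝒜] [Fintype D]
    (μ : Ω → ℝ) (u : X → ℝ) (A : D → Finset 𝒜) (hA : ∀ i, (A i).Nonempty)
    (x : D → 𝒜 → Ω → X) (P : D → 𝒜 → Ω → ℝ)
    (hμ : IsPrior μ) (hP : IsSDSC μ A P)
    (hNIS : NIS u A hA x P) :
    NIAS u A x P :=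
  nis_implies_nias_general u A hA x P hNIS
end
end

section
/- If state-dependent stochastic choice data P satisfies NIS for the utility function u, then P satisfies NIAC for u. -/
open Finset
open scoped Classical

noncomputable section

variable {Ω 𝒜 D X : Type*}

/-- No Improving Attention Cycles, for every finite (cyclic) sequence of decision problems. -/
def NIAC [Fintype Ω] (u : X → ℝ) (A : D → Finset 𝒜) (hA : ∀ i, (A i).Nonempty)
    (x : D → 𝒜 → Ω → X) (P : D → 𝒜 → Ω → ℝ) : Prop :=
  ∀ (J : ℕ) (σ : Fin (J + 1) → D),
    ∑ j, ∑ a ∈ A (σ j), (A (σ j)).sup' (hA (σ j))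
        (fun a' => ∑ ω, P (σ j) a ω * u (x (σ j) a' ω)) ≥
      ∑ j, ∑ a ∈ A (σ (j + 1)), (A (σ j)).sup' (hA (σ j))
        (fun a' => ∑ ω, P (σ (j + 1)) a ω * u (x (σ j) a' ω))

theorem NIS.sum_sup'_switch_le [Fintype Ω] {u : X → ℝ} {A : D → Finset 𝒜}
    {hA : ∀ i, (A i).Nonempty} {x : D → 𝒜 → Ω → X} {P : D → 𝒜 → Ω → ℝ}
    (hNIS : NIS u A hA x P) (i j : D) :
    ∑ a ∈ A j, (A i).sup' (hA i) (fun a' => ∑ ω, P j a ω * u (x i a' ω)) ≤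
      ∑ a ∈ A i, (A i).sup' (hA i) (fun a' => ∑ ω, P i a ω * u (x i a' ω)) :=
  (hNIS i j).le.trans <| sum_le_sum fun a ha =>
    le_sup' (fun a' => ∑ ω, P i a ω * u (x i a' ω)) ha

theorem nis_implies_niac_general [Fintype Ω]
    (u : X → ℝ) (A : D → Finset 𝒜) (hA : ∀ i, (A i).Nonempty)
    (x : D → 𝒜 → Ω → X) (P : D → 𝒜 → Ω → ℝ)
    (hNIS : NIS u A hA x P) :
    NIAC u A hA x P :=
  fun _ σ => sum_le_sum fun j _ => hNIS.sum_sup'_switch_le (σ j) (σ (j + 1))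

/-- If SDSC data `P` satisfies NIS for `u`, then `P` satisfies NIAC for `u`. -/
theorem nis_implies_niac [Fintype Ω] [Fintype 𝒜] [Fintype D]
    (μ : Ω → ℝ) (u : X → ℝ) (A : D → Finset 𝒜) (hA : ∀ i, (A i).Nonempty)
    (x : D → 𝒜 → Ω → X) (P : D → 𝒜 → Ω → ℝ)
    (hμ : IsPrior μ) (hP : IsSDSC μ A P)
    (hNIS : NIS u A hA x P) :
    NIAC u A hA x P :=
  nis_implies_niac_general u A hA x P hNIS
end
end

section
/- NIAS and NIAC together do not imply NIS. Concretely, let Ω = {ω1, ω2} with uniform prior μ(ω1) = μ(ω2) = 1/2, 𝒜 = {a1, a2}, D = {1, 2} with A_1 = A_2 = 𝒜, prizes X = ℝ, u the identity, and prize specification x_i(a_k, ω_l) = p_i if k = l and 0 otherwise, where p_1 = 5 and p_2 = 40. Let P_1(a1,ω1) = 0.37, P_1(a1,ω2) = 0.20, P_1(a2,ω1) = 0.13, P_1(a2,ω2) = 0.30, and P_2(a1,ω1) = 0.38, P_2(a1,ω2) = 0.17, P_2(a2,ω1) = 0.12, P_2(a2,ω2) = 0.33. Then P satisfies NIAS and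 NIAC for u but P does not satisfy NIS for u. -/
open Finset
open scoped Classical

noncomputable section

variable {Ω 𝒜 D X : Type*}

/-- The prize levels of the two decision problems. -/
def p6 : Fin 2 → ℝ := ![5, 40]

/-- Common action set: both actions available in each decision problem. -/
def A6 : Fin 2 → Finset (Fin 2) := fun _ => Finset.univ

/-- Each action set is nonempty. -/
def hA6 : ∀ i : Fin 2, (A6 i).Nonempty := fun _ => Finset.univ_nonempty

/-- Prize specification: `p_i` if the action matches the state, `0` otherwise. -/
def x6 : Fin 2 → Fin 2 → Fin 2 → ℝ := fun i a ω => if a = ω then p6 i else 0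

/-- The observed SDSC data from Experiment 1.2 of DN23 (decision problems 1 and 2). -/
def P6 : Fin 2 → Fin 2 → Fin 2 → ℝ :=
  ![![![0.37, 0.20], ![0.13, 0.30]], ![![0.38, 0.17], ![0.12, 0.33]]]

/-!
With prize `pᵢ` for matching the state, acting optimally in problem `i` on the information of
problem `j` is worth `pᵢ Mⱼ`, where `Mⱼ = Σₐ max_ω Pⱼ(a, ω)` is the value of that information at
unit prize. Here `M₁ = 0.67 < 0.71 = M₂`, so problem 1 would gain by adopting the attention
strategy of problem 2 and NIS fails. NIAC compares the cyclic sums `Σⱼ p_{σ j} M_{σ j}` and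
`Σⱼ p_{σ j} M_{σ (j+1)}`; since `p` and `M` are ordered alike, this is the rearrangement
inequality.
-/

section SwitchValue

variable [Fintype Ω] (u : X → ℝ) (A : D → Finset 𝒜) (hA : ∀ i, (A i).Nonempty)
  (x : D → 𝒜 → Ω → X) (P : D → 𝒜 → Ω → ℝ)

/-- The expected utility in problem `i` of acting optimally on the information that the choice
data of problem `j` reveals. -/
def switchValue (i j : D) : ℝ :=
  ∑ a ∈ A j, (A i).sup' (hA i) fun a' => ∑ ω, P j a ω * u (x i a' ω)

variable {u A x P}

theorem NIAS.sum_eq_switchValue_self (h : NIAS u A x P) (i : D) :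
    ∑ a ∈ A i, ∑ ω, P i a ω * u (x i a ω) = switchValue u A hA x P i i :=
  sum_congr rfl fun a ha =>
    le_antisymm (le_sup' (fun a' => ∑ ω, P i a ω * u (x i a' ω)) ha)
      (sup'_le _ _ fun a' ha' => h i a ha a' ha')

theorem NIAS.not_nis_of_switchValue_lt (h : NIAS u A x P) {i j : D}
    (hij : switchValue u A hA x P i i < switchValue u A hA x P i j) : ¬ NIS u A hA x P :=
  fun hNIS => (hNIS i j).not_gt (by rwa [h.sum_eq_switchValue_self hA])

theorem niac_of_switchValue_eq_mul {f g : D → ℝ} (hfg : Monovary f g)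
    (hsplit : ∀ i j, switchValue u A hA x P i j = f i * g j) : NIAC u A hA x P := by
  intro J σ
  change ∑ j, switchValue u A hA x P (σ j) (σ j) ≥
    ∑ j, switchValue u A hA x P (σ j) (σ (j + 1))
  simp only [hsplit]
  exact (hfg.comp_right σ).sum_mul_comp_perm_le_sum_mul (σ := Equiv.addRight 1)

end SwitchValue

lemma sup'_univ_fin_two {α : Type*} [SemilatticeSup α] (f : Fin 2 → α) (h : univ.Nonempty) :
    univ.sup' h f = f 0 ⊔ f 1 := by
  simp [show (univ : Finset (Fin 2)) = {0, 1} from rfl, sup'_insert]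

lemma p6_nonneg (i : Fin 2) : 0 ≤ p6 i := by
  fin_cases i <;> norm_num [p6]

lemma sum_mul_x6 (i a : Fin 2) (q : Fin 2 → ℝ) : ∑ ω, q ω * x6 i a ω = p6 i * q a := by
  simp [x6, mul_comm]

def unitPrizeValue6 (j : Fin 2) : ℝ := ∑ a, univ.sup' univ_nonempty (P6 j a)

lemma unitPrizeValue6_zero : unitPrizeValue6 0 = 0.67 := by
  norm_num [unitPrizeValue6, P6, Fin.sum_univ_two, sup'_univ_fin_two]

lemma unitPrizeValue6_one : unitPrizeValue6 1 = 0.71 := by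
  norm_num [unitPrizeValue6, P6, Fin.sum_univ_two, sup'_univ_fin_two]

lemma switchValue6 (i j : Fin 2) :
    switchValue id A6 hA6 x6 P6 i j = p6 i * unitPrizeValue6 j := by
  simp only [switchValue, unitPrizeValue6, A6, id, sum_mul_x6, mul_sum,
    mul₀_sup' (p6_nonneg i)]

lemma nias6 : NIAS (id : ℝ → ℝ) A6 x6 P6 := by
  intro i a _ a' _
  simp only [id, sum_mul_x6]
  refine mul_le_mul_of_nonneg_left ?_ (p6_nonneg i)
  fin_cases i <;> fin_cases a <;> fin_cases a' <;> norm_num [P6]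

lemma monovary_p6_unitPrizeValue6 : Monovary p6 unitPrizeValue6 := by
  intro i j
  fin_cases i <;> fin_cases j <;> norm_num [unitPrizeValue6_zero, unitPrizeValue6_one, p6]

/-- NIAS and NIAC together do not imply NIS: in the concrete example from DN23
Experiment 1.2, `P` satisfies NIAS and NIAC for `u = id` but violates NIS. -/
theorem nias_and_niac_do_not_imply_nis :
    NIAS (id : ℝ → ℝ) A6 x6 P6 ∧ NIAC (id : ℝ → ℝ) A6 hA6 x6 P6 ∧
      ¬ NIS (id : ℝ → ℝ) A6 hA6 x6 P6 := by
  refine ⟨nias6, niac_of_switchValue_eq_mul hA6 monovary_p6_unitPrizeValue6 switchValue6, ?_⟩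
  refine nias6.not_nis_of_switchValue_lt hA6 (i := 0) (j := 1) ?_
  rw [switchValue6, switchValue6]
  norm_num [unitPrizeValue6_zero, unitPrizeValue6_one, p6]
end
end

section
/- In the binary symmetric setting, P satisfies NIS for u if and only if (i) for every i ∈ D: P_i(a1,ω1) ≥ P_i(a1,ω2) and P_i(a2,ω2) ≥ P_i(a2,ω1) (the NIAS conditions), and (ii) accuracy is identical across decision problems: P_i(a1,ω1) + P_i(a2,ω2) = P_j(a1,ω1) + P_j(a2,ω2) for all i, j ∈ D. -/
open Finset
open scoped Classical

noncomputable section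

variable {Ω 𝒜 D X : Type*}

/-! With matching prizes, the payoff of action `a'` when problem `j`'s data recommends `a` is
`p i * P j a a'`, so NIS for `(i, j)` says that the accuracy `∑ a, P i a a` of `i` dominates the
sum of the row maxima of `P j`. Taking `j = i` forces every row maximum onto the diagonal, which
is NIAS; the row-maximum sum of `j` is then the accuracy of `j`, and exchanging `i` and `j` makes
the accuracies equal. -/

section Matching

variable {ι D : Type*} [Fintype ι]

lemma sum_mul_ite_eq_mul [DecidableEq ι] (q : ι → ℝ) (c : ℝ) (a' : ι) :
    ∑ ω, q ω * (if a' = ω then c else 0) = c * q a' := by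
  simp [mul_comm]

variable [Nonempty ι]

theorem nis_matching_iff [DecidableEq ι] (p : D → ℝ) (hp : ∀ i, 0 < p i) (P : D → ι → ι → ℝ) :
    NIS (id : ℝ → ℝ) (fun _ : D => (univ : Finset ι)) (fun _ => univ_nonempty)
        (fun i a ω => if a = ω then p i else 0) P ↔
      ∀ i j, ∑ a, univ.sup' univ_nonempty (P j a) ≤ ∑ a, P i a a := by
  refine forall₂_congr fun i j => ?_
  simp only [id, sum_mul_ite_eq_mul, ← Finset.mul₀_sup' (hp i).le, ← Finset.mul_sum, ge_iff_le]
  exact mul_le_mul_iff_right₀ (hp i)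

lemma sup'_eq_of_forall_le_diag {Q : ι → ι → ℝ} {a : ι} (hmax : ∀ a', Q a a' ≤ Q a a) :
    univ.sup' univ_nonempty (Q a) = Q a a :=
  le_antisymm (sup'_le _ _ fun a' _ => hmax a') (le_sup' _ (mem_univ a))

lemma sum_sup'_le_sum_diag_iff (Q : ι → ι → ℝ) :
    ∑ a, univ.sup' univ_nonempty (Q a) ≤ ∑ a, Q a a ↔ ∀ a a', Q a a' ≤ Q a a := by
  have diag_le : ∀ a, Q a a ≤ univ.sup' univ_nonempty (Q a) := fun a => le_sup' _ (mem_univ a)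
  refine ⟨fun hle a a' => ?_, fun hmax =>
    (sum_congr rfl fun a _ => sup'_eq_of_forall_le_diag (hmax a)).le⟩
  have hsum : ∑ a, Q a a = ∑ a, univ.sup' univ_nonempty (Q a) :=
    le_antisymm (sum_le_sum fun a _ => diag_le a) hle
  have hrow := (sum_eq_sum_iff_of_le fun a _ => diag_le a).1 hsum a (mem_univ a)
  exact hrow ▸ le_sup' _ (mem_univ a')

theorem forall_sum_sup'_le_sum_diag_iff (P : D → ι → ι → ℝ) :
    (∀ i j, ∑ a, univ.sup' univ_nonempty (P j a) ≤ ∑ a, P i a a) ↔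
      (∀ i a a', P i a a' ≤ P i a a) ∧ ∀ i j, ∑ a, P i a a = ∑ a, P j a a := by
  have best_response_eq : ∀ j, (∀ a a', P j a a' ≤ P j a a) →
      ∑ a, univ.sup' univ_nonempty (P j a) = ∑ a, P j a a :=
    fun j hmax => sum_congr rfl fun a _ => sup'_eq_of_forall_le_diag (hmax a)
  constructor
  · intro h
    have diag_max : ∀ i a a', P i a a' ≤ P i a a := fun i => (sum_sup'_le_sum_diag_iff _).1 (h i i)
    refine ⟨diag_max, fun i j => le_antisymm ?_ ?_⟩
    · simpa only [best_response_eq i (diag_max i)] using h j i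
    · simpa only [best_response_eq j (diag_max j)] using h i j
  · rintro ⟨diag_max, acc⟩ i j
    rw [best_response_eq j (diag_max j), acc j i]

end Matching

theorem nis_iff_binary_symmetric_general {D : Type*}
    (p : D → ℝ) (hp : ∀ i, 0 < p i)
    (P : D → Fin 2 → Fin 2 → ℝ) :
    NIS (id : ℝ → ℝ) (fun _ : D => (Finset.univ : Finset (Fin 2)))
        (fun _ => Finset.univ_nonempty)
        (fun i a ω => if a = ω then p i else 0) P ↔
      (∀ i, P i 0 0 ≥ P i 0 1 ∧ P i 1 1 ≥ P i 1 0) ∧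
        ∀ i j, P i 0 0 + P i 1 1 = P j 0 0 + P j 1 1 := by
  rw [nis_matching_iff p hp, forall_sum_sup'_le_sum_diag_iff]
  simp only [Fin.forall_fin_two, Fin.sum_univ_two, le_refl, true_and, and_true, ge_iff_le]

/-- In the binary symmetric setting (two equally likely states, two actions, prize `p i > 0`
for matching the state and `0` otherwise, `u = id`), `P` satisfies NIS iff (i) NIAS holds
pointwise and (ii) accuracy is identical across decision problems. -/
theorem nis_iff_binary_symmetric {D : Type*} [Fintype D]
    (p : D → ℝ) (hp : ∀ i, 0 < p i)
    (P : D → Fin 2 → Fin 2 → ℝ)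
    (hP0 : ∀ i a ω, 0 ≤ P i a ω) (hP1 : ∀ i a ω, P i a ω ≤ 1)
    (hPsum : ∀ i ω, ∑ a, P i a ω = 1 / 2) :
    NIS (id : ℝ → ℝ) (fun _ : D => (Finset.univ : Finset (Fin 2)))
        (fun _ => Finset.univ_nonempty)
        (fun i a ω => if a = ω then p i else 0) P ↔
      (∀ i, P i 0 0 ≥ P i 0 1 ∧ P i 1 1 ≥ P i 1 0) ∧
        ∀ i j, P i 0 0 + P i 1 1 = P j 0 0 + P j 1 1 :=
  nis_iff_binary_symmetric_general p hp P
end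
end
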